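/- Let x_1, …, x_n ∈ ℝ^p and suppose P = conv{x_1, …, x_n} is full-dimensional with exactly k extreme points h_1, …, h_k, whose normal cones have solid angles ω_i = ω(N_P(h_i)) satisfying 0 < ω_i < 1/2 for every i. Let g_1, …, g_m be i.i.d. standard Gaussian vectors in ℝ^p and let δ ∈ (0,1). If m > κ̄ k log(k/δ) where κ̄ = 1/(k · log(1/max_i(1 − 2ω_i))), then with probability at least 1 − δ, for every i ∈ {1,…,k} there exists j ∈ {1,…,m} with g_j ∈ N_P(h_i) ∪ (−N_P(h_i)). -/

import Mathlib

open MeasureTheory ProbabilityTheory Metric Set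
open scoped Pointwise

/-- The standard Gaussian measure `N(0, I_p)` on `ℝ^p`. -/
noncomputable def stdGaussian (p : ℕ) : Measure (EuclideanSpace ℝ (Fin p)) :=
  (Measure.pi fun _ : Fin p => gaussianReal 0 1).map
    (MeasurableEquiv.toLp 2 (Fin p → ℝ))

/-- The solid angle of a cone `K ⊆ ℝ^p`: its standard Gaussian measure. -/
noncomputable def solidAngle {p : ℕ} (K : Set (EuclideanSpace ℝ (Fin p))) : ℝ :=
  (stdGaussian p K).toReal

/-- The normal cone of a convex set `C` at a point `x`. -/
def normalCone {p : ℕ} (C : Set (EuclideanSpace ℝ (Fin p))) (x : EuclideanSpace ℝ (Fin p)) :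
    Set (EuclideanSpace ℝ (Fin p)) :=
  {w | ∀ y ∈ C, (inner ℝ w (y - x) : ℝ) ≤ 0}

/-!
The symmetric event `g ∈ N ∪ -N` for a normal cone `N = N_P(h_i)` has Gaussian probability
exactly `2 ω_i`: the Gaussian is invariant under `g ↦ -g`, and `N ∩ -N = {0}` is a null set
because a vector orthogonal to `P - h_i` for a set `P` with interior must vanish. Hence a vertex
is missed by all `m` independent samples with probability `(1 - 2 ω_i)^m ≤ q^m`, where
`q = max_i (1 - 2 ω_i)`, and the union bound over the `k` vertices gives failure probability at
most `k q^m`, which the hypothesis on `m` makes smaller than `δ` after taking logarithms.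
-/

open Filter Topology

instance (p : ℕ) : IsProbabilityMeasure (stdGaussian p) :=
  Measure.isProbabilityMeasure_map (MeasurableEquiv.measurable _).aemeasurable

lemma stdGaussian_eq_stdGaussian_euclideanSpace (p : ℕ) :
    stdGaussian p = ProbabilityTheory.stdGaussian (EuclideanSpace ℝ (Fin p)) :=
  map_pi_eq_stdGaussian

instance {E : Type*} [NormedAddCommGroup E] [InnerProductSpace ℝ E] [FiniteDimensional ℝ E]
    [MeasurableSpace E] [BorelSpace E] : (ProbabilityTheory.stdGaussian E).IsNegInvariant :=
  ⟨stdGaussian_map (LinearIsometryEquiv.neg ℝ)⟩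

instance (p : ℕ) : (stdGaussian p).IsNegInvariant := by
  rw [stdGaussian_eq_stdGaussian_euclideanSpace]
  infer_instance

instance (p : ℕ) [NeZero p] : NullSingletonClass (stdGaussian p) := by
  have := nullSingletonClass_gaussianReal (μ := 0) one_ne_zero
  refine ⟨fun a => ?_⟩
  rw [_root_.stdGaussian, MeasurableEquiv.map_apply, ← MeasurableEquiv.image_symm, image_singleton,
    measure_singleton]

section NormalCone

variable {p : ℕ}

lemma isClosed_normalCone (C : Set (EuclideanSpace ℝ (Fin p))) (x : EuclideanSpace ℝ (Fin p)) :
    IsClosed (normalCone C x) := by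
  simp only [normalCone, ofPred_forall]
  exact isClosed_biInter fun y _ => isClosed_le (continuous_id.inner continuous_const)
    continuous_const

lemma normalCone_inter_neg_subset_zero {C : Set (EuclideanSpace ℝ (Fin p))}
    (hC : (interior C).Nonempty) (x : EuclideanSpace ℝ (Fin p)) :
    normalCone C x ∩ -normalCone C x ⊆ {0} := by
  rintro w ⟨hw, hw'⟩
  have horth : ∀ y ∈ C, inner ℝ w (y - x) = 0 := fun y hy =>
    le_antisymm (hw y hy) (by simpa [inner_neg_left] using hw' y hy)
  obtain ⟨c, hc⟩ := hC
  have hnear : ∀ᶠ t : ℝ in 𝓝 0, c + t • w ∈ C := by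
    have : Tendsto (fun t : ℝ => c + t • w) (𝓝 0) (𝓝 c) :=
      Continuous.tendsto' (by fun_prop) 0 c (by simp)
    exact this.eventually (mem_interior_iff_mem_nhds.mp hc)
  obtain ⟨t, hct, ht⟩ := ((hnear.filter_mono nhdsWithin_le_nhds).and self_mem_nhdsWithin :
    ∀ᶠ t in 𝓝[≠] (0 : ℝ), c + t • w ∈ C ∧ t ≠ 0).exists
  have hcw : t * inner ℝ w w = 0 := by
    have := horth _ hct
    rwa [show c + t • w - x = (c - x) + t • w by abel, inner_add_right,
      horth c (interior_subset hc), real_inner_smul_right, zero_add] at this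
  simpa [ht] using hcw

lemma stdGaussian_compl_normalCone_union_neg [NeZero p] {C : Set (EuclideanSpace ℝ (Fin p))}
    (hC : (interior C).Nonempty) (x : EuclideanSpace ℝ (Fin p)) :
    (stdGaussian p (normalCone C x ∪ -normalCone C x)ᶜ).toReal =
      1 - 2 * solidAngle (normalCone C x) := by
  set N := normalCone C x
  have hN : MeasurableSet N := (isClosed_normalCone C x).measurableSet
  have hnull : stdGaussian p (N ∩ -N) = 0 :=
    measure_mono_null (normalCone_inter_neg_subset_zero hC x) (measure_singleton 0)
  have hunion : stdGaussian p (N ∪ -N) = 2 * stdGaussian p N := by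
    rw [← add_zero (stdGaussian p (N ∪ -N)), ← hnull, measure_union_add_inter _ hN.neg,
      Measure.measure_neg, two_mul]
  rw [prob_compl_eq_one_sub (hN.union hN.neg), ENNReal.toReal_sub_of_le prob_le_one
    ENNReal.one_ne_top, hunion, ENNReal.toReal_mul, solidAngle]
  simp

lemma solidAngle_normalCone_of_dim_zero (C : Set (EuclideanSpace ℝ (Fin 0)))
    (x : EuclideanSpace ℝ (Fin 0)) : solidAngle (normalCone C x) = 1 := by
  have : normalCone C x = univ := eq_univ_of_forall fun w y _ => by
    simp [Subsingleton.elim (y - x) 0]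
  simp [solidAngle, this]

end NormalCone

lemma one_sub_sum_pow_le_measure_pi_forall_exists {α ι : Type*} [MeasurableSpace α] [Fintype ι]
    (μ : Measure α) [IsProbabilityMeasure μ] (S : ι → Set α) (m : ℕ) :
    1 - ∑ i, (μ (S i)ᶜ).toReal ^ m ≤
      ((Measure.pi fun _ : Fin m => μ) {g | ∀ i, ∃ j, g j ∈ S i}).toReal := by
  set ν := Measure.pi fun _ : Fin m => μ
  set E := {g : Fin m → α | ∀ i, ∃ j, g j ∈ S i}
  have hmiss : Eᶜ ⊆ ⋃ i, univ.pi fun _ => (S i)ᶜ := by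
    intro g hg
    simpa [E] using hg
  have hfail : ν.real Eᶜ ≤ ∑ i, (μ (S i)ᶜ).toReal ^ m :=
    calc ν.real Eᶜ ≤ ν.real (⋃ i, univ.pi fun _ => (S i)ᶜ) := measureReal_mono hmiss
      _ ≤ ∑ i, ν.real (univ.pi fun _ => (S i)ᶜ) := measureReal_iUnion_fintype_le _
      _ = ∑ i, (μ (S i)ᶜ).toReal ^ m := by simp [ν, measureReal_def, Measure.pi_pi]
  have hcover : 1 ≤ ν.real E + ν.real Eᶜ := by
    simpa [union_compl_self] using measureReal_union_le (μ := ν) E Eᶜ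
  rw [← measureReal_def]
  linarith

lemma mul_pow_lt_of_gt_log_div_log {k q δ : ℝ} {m : ℕ} (hk : 0 < k) (hδ : 0 < δ) (hq₀ : 0 < q)
    (hq₁ : q < 1) (hm : (m : ℝ) > 1 / (k * Real.log (1 / q)) * k * Real.log (k / δ)) :
    k * q ^ m < δ := by
  have hL : 0 < Real.log (1 / q) := Real.log_pos (by rw [one_div]; exact one_lt_inv₀ hq₀ |>.mpr hq₁)
  have hlog : Real.log (k / δ) < m * Real.log (1 / q) := by
    rw [show 1 / (k * Real.log (1 / q)) * k * Real.log (k / δ) =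
      Real.log (k / δ) / Real.log (1 / q) by field_simp] at hm
    exact (div_lt_iff₀ hL).mp hm
  rw [Real.log_div hk.ne' hδ.ne', one_div, Real.log_inv] at hlog
  have : Real.log (k * q ^ m) < Real.log δ := by
    rw [Real.log_mul hk.ne' (pow_pos hq₀ m).ne', Real.log_pow]
    linarith
  exact (Real.log_lt_log_iff (by positivity) hδ).mp this

theorem proto_algorithm_exact_recovery_normalized_general
    (p k m : ℕ)
    (P : Set (EuclideanSpace ℝ (Fin p)))
    (hfull : (interior P).Nonempty)
    (h : Fin k → EuclideanSpace ℝ (Fin p))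
    (ω : Fin k → ℝ) (hω : ∀ i, ω i = solidAngle (normalCone P (h i)))
    (hωpos : ∀ i, 0 < ω i) (hωlt : ∀ i, ω i < 1 / 2)
    (δ : ℝ) (hδ : δ ∈ Set.Ioo (0 : ℝ) 1)
    (κbar : ℝ) (hκbar : κbar = 1 / (k * Real.log (1 / (⨆ i, 1 - 2 * ω i))))
    (hm : (m : ℝ) > κbar * k * Real.log (k / δ)) :
    1 - δ ≤ ((Measure.pi fun _ : Fin m => stdGaussian p)
      {g | ∀ i : Fin k, ∃ j : Fin m,
        g j ∈ normalCone P (h i) ∪ -normalCone P (h i)}).toReal := by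
  refine le_trans ?_ (one_sub_sum_pow_le_measure_pi_forall_exists _
    (fun i => normalCone P (h i) ∪ -normalCone P (h i)) m)
  suffices ∑ i, (stdGaussian p (normalCone P (h i) ∪ -normalCone P (h i))ᶜ).toReal ^ m < δ by
    linarith
  rcases isEmpty_or_nonempty (Fin k) with hk | hk
  · simpa using hδ.1
  obtain ⟨i₀, hi₀⟩ := exists_eq_ciSup_of_finite (f := fun i => 1 - 2 * ω i)
  have : NeZero p := ⟨by
    rintro rfl
    linarith [hωlt i₀, hω i₀, solidAngle_normalCone_of_dim_zero P (h i₀)]⟩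
  have hq : ∀ i, 1 - 2 * ω i ≤ ⨆ i, 1 - 2 * ω i := le_ciSup (Finite.bddAbove_range _)
  calc ∑ i, (stdGaussian p (normalCone P (h i) ∪ -normalCone P (h i))ᶜ).toReal ^ m
        = ∑ i, (1 - 2 * ω i) ^ m := by
          simp_rw [stdGaussian_compl_normalCone_union_neg hfull, hω]
    _ ≤ ∑ _i : Fin k, (⨆ i, 1 - 2 * ω i) ^ m :=
          Finset.sum_le_sum fun i _ => pow_le_pow_left₀ (by linarith [hωlt i]) (hq i) m
    _ = k * (⨆ i, 1 - 2 * ω i) ^ m := by simp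
    _ < δ := mul_pow_lt_of_gt_log_div_log (by exact_mod_cast Fin.pos_iff_nonempty.mpr hk) hδ.1
          (by rw [← hi₀]; linarith [hωlt i₀]) (by rw [← hi₀]; linarith [hωpos i₀]) (hκbar ▸ hm)

/-- Corollary 1: if `m > κ̄ k log(k/δ)` with `κ̄ = 1/(k log(1/max_i (1 - 2ω_i)))`, then the
proto-algorithm finds all `k` extreme points with probability at least `1 - δ`. -/
theorem proto_algorithm_exact_recovery_normalized
    (p n k m : ℕ) (x : Fin n → EuclideanSpace ℝ (Fin p))
    (P : Set (EuclideanSpace ℝ (Fin p))) (hP : P = convexHull ℝ (Set.range x))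
    (hfull : (interior P).Nonempty)
    (h : Fin k → EuclideanSpace ℝ (Fin p)) (hinj : Function.Injective h)
    (hext : Set.range h = Set.extremePoints ℝ P)
    (ω : Fin k → ℝ) (hω : ∀ i, ω i = solidAngle (normalCone P (h i)))
    (hωpos : ∀ i, 0 < ω i) (hωlt : ∀ i, ω i < 1 / 2)
    (δ : ℝ) (hδ : δ ∈ Set.Ioo (0 : ℝ) 1)
    (κbar : ℝ) (hκbar : κbar = 1 / (k * Real.log (1 / (⨆ i, 1 - 2 * ω i))))
    (hm : (m : ℝ) > κbar * k * Real.log (k / δ)) :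
    1 - δ ≤ ((Measure.pi fun _ : Fin m => stdGaussian p)
      {g | ∀ i : Fin k, ∃ j : Fin m,
        g j ∈ normalCone P (h i) ∪ -normalCone P (h i)}).toReal :=
  proto_algorithm_exact_recovery_normalized_general p k m P hfull h ω hω hωpos hωlt δ hδ κbar hκbar
    hm
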